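/- Relational bounding for relativized Bellantoni–Cook: if R is a set of two-sorted relations (functions with values in {0,1}) and f(R)(x⃗;y⃗) ∈ B(R), then there is a polynomial p_f such that, setting m_f(m⃗,n⃗) = p_f(m⃗) + max n⃗, (i) |f(R)(x⃗;y⃗)| < m_f(|x⃗|,|y⃗|), and (ii) f(R)(x⃗;y⃗) is unchanged if every oracle r ∈ R is replaced by its restriction to inputs of length below m_f(|x⃗|,|y⃗|) (extended by 0 elsewhere). -/

import Mathlib

/-- Two-sorted functions with `m` normal and `n` safe arguments. -/
def TS (m n : ℕ) : Type := (Fin m → ℕ) → (Fin n → ℕ) → ℕ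

/-- Terms of the Bellantoni–Cook algebra over oracle symbols `i : I` of
normal/safe arities `arN i` / `arS i`: initial functions, safe composition
and safe recursion on notation. -/
inductive Tm (I : Type) (arN arS : I → ℕ) : ℕ → ℕ → Type
  | zero {m n : ℕ} : Tm I arN arS m n
  | succ0 {m n : ℕ} (j : Fin n) : Tm I arN arS m n
  | succ1 {m n : ℕ} (j : Fin n) : Tm I arN arS m n
  | projN {m n : ℕ} (j : Fin m) : Tm I arN arS m n
  | projS {m n : ℕ} (j : Fin n) : Tm I arN arS m n
  | pred {m n : ℕ} (j : Fin n) : Tm I arN arS m n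
  | cond {m n : ℕ} (w a b c : Fin n) : Tm I arN arS m n
  | oracle (i : I) : Tm I arN arS (arN i) (arS i)
  | comp {m n m' n' : ℕ} (h : Tm I arN arS m' n')
      (gN : Fin m' → Tm I arN arS m 0) (gS : Fin n' → Tm I arN arS m n) :
      Tm I arN arS m n
  | srec {m n : ℕ} (g : Tm I arN arS m n) (h0 h1 : Tm I arN arS (m+1) (n+1)) :
      Tm I arN arS (m+1) n

/-- Semantics of safe recursion on notation. -/
def srecAux {m n : ℕ} (G : TS m n) (H0 H1 : TS (m+1) (n+1))
    (v : ℕ) (x : Fin m → ℕ) (y : Fin n → ℕ) : ℕ :=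
  if h : v = 0 then G x y
  else
    (if v % 2 = 0 then H0 else H1) (Fin.cons (v / 2) x)
      (Fin.snoc y (srecAux G H0 H1 (v / 2) x y))
  termination_by v
  decreasing_by exact Nat.div_lt_self (Nat.pos_of_ne_zero h) one_lt_two

/-- Evaluation of a term relative to an assignment `ρ` of the oracles. -/
def Tm.eval {I : Type} {arN arS : I → ℕ} (ρ : ∀ i : I, TS (arN i) (arS i)) :
    ∀ {m n : ℕ}, Tm I arN arS m n → TS m n
  | _, _, .zero => fun _ _ => 0
  | _, _, .succ0 j => fun _ y => 2 * y j
  | _, _, .succ1 j => fun _ y => 2 * y j + 1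
  | _, _, .projN j => fun x _ => x j
  | _, _, .projS j => fun _ y => y j
  | _, _, .pred j => fun _ y => y j / 2
  | _, _, .cond w a b c => fun _ y =>
      if y w = 0 then y a else if y w % 2 = 0 then y b else y c
  | _, _, .oracle i => ρ i
  | _, _, .comp h gN gS => fun x y =>
      Tm.eval ρ h (fun i => Tm.eval ρ (gN i) x Fin.elim0) (fun i => Tm.eval ρ (gS i) x y)
  | _, _, .srec g h0 h1 => fun x y =>
      srecAux (Tm.eval ρ g) (Tm.eval ρ h0) (Tm.eval ρ h1) (x 0) (Fin.tail x) y

open MvPolynomial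

lemma mv_eval_mono {σ : Type*} (p : MvPolynomial σ ℕ) {f g : σ → ℕ} (h : ∀ i, f i ≤ g i) :
    eval f p ≤ eval g p := by
  induction p using MvPolynomial.induction_on with
  | C a => simp
  | add p q hp hq => simp only [map_add]; exact Nat.add_le_add hp hq
  | mul_X p i hp => simp only [map_mul, eval_X]; exact Nat.mul_le_mul hp (h i)

lemma eval_bind1 {σ τ : Type*} (f : τ → ℕ) (g : σ → MvPolynomial τ ℕ) (φ : MvPolynomial σ ℕ) :
    eval f (bind₁ g φ) = eval (fun i => eval f (g i)) φ := by
  simpa using MvPolynomial.eval₂Hom_bind₁ (RingHom.id ℕ) f g φ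

lemma size_two_mul (a : ℕ) : Nat.size (2 * a) ≤ Nat.size a + 1 := by
  rw [Nat.size_le, pow_succ, mul_comm (2 ^ Nat.size a) 2]
  have := Nat.lt_size_self a
  omega

lemma size_two_mul_add_one (a : ℕ) : Nat.size (2 * a + 1) ≤ Nat.size a + 1 := by
  rw [Nat.size_le, pow_succ, mul_comm (2 ^ Nat.size a) 2]
  have := Nat.lt_size_self a
  omega

lemma size_div_two (v : ℕ) (hv : v ≠ 0) : Nat.size v = Nat.size (v / 2) + 1 := by
  apply le_antisymm
  · rw [Nat.size_le, pow_succ]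
    have := Nat.lt_size_self (v / 2)
    omega
  · rw [Nat.succ_le_iff, Nat.lt_size]
    rcases Nat.eq_zero_or_pos (v / 2) with h | h
    · simp [h]; omega
    · have h2 : 2 ^ (Nat.size (v/2) - 1) ≤ v / 2 := by
        rw [← Nat.lt_size]
        have := Nat.size_pos.2 h
        omega
      have hs := Nat.size_pos.2 h
      calc 2 ^ Nat.size (v/2) = 2 * 2 ^ (Nat.size (v/2) - 1) := by
            rw [← pow_succ']
            congr 1
            omega
        _ ≤ 2 * (v / 2) := by omega
        _ ≤ v := Nat.mul_div_le v 2

lemma srecAux_zero {m n : ℕ} (G : TS m n) (H0 H1 : TS (m+1) (n+1)) (x : Fin m → ℕ)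
    (y : Fin n → ℕ) : srecAux G H0 H1 0 x y = G x y := by
  rw [srecAux]
  simp

lemma srecAux_ne {m n : ℕ} (G : TS m n) (H0 H1 : TS (m+1) (n+1)) {v : ℕ} (hv : v ≠ 0)
    (x : Fin m → ℕ) (y : Fin n → ℕ) :
    srecAux G H0 H1 v x y = (if v % 2 = 0 then H0 else H1) (Fin.cons (v / 2) x)
      (Fin.snoc y (srecAux G H0 H1 (v / 2) x y)) := by
  rw [srecAux]
  simp [hv]

/-- threshold -/
noncomputable def thr {m n : ℕ} (p : MvPolynomial (Fin m) ℕ) (x : Fin m → ℕ) (y : Fin n → ℕ) : ℕ :=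
  MvPolynomial.eval (fun i => Nat.size (x i)) p + Finset.univ.sup (fun i => Nat.size (y i))

lemma le_sup_size {n : ℕ} (y : Fin n → ℕ) (j : Fin n) :
    Nat.size (y j) ≤ Finset.univ.sup (fun i => Nat.size (y i)) :=
  Finset.le_sup (f := fun i => Nat.size (y i)) (Finset.mem_univ j)

theorem key {I : Type} {arN arS : I → ℕ} {m n : ℕ} (t : Tm I arN arS m n) :
    ∃ p : MvPolynomial (Fin m) ℕ,
      ∀ ρ : ∀ i : I, TS (arN i) (arS i), (∀ i u v, ρ i u v ≤ 1) →
        ∀ (x : Fin m → ℕ) (y : Fin n → ℕ),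
          Nat.size (t.eval ρ x y) < thr p x y ∧
          ∀ ρ' : ∀ i : I, TS (arN i) (arS i),
            (∀ i u v, (∀ a, Nat.size (u a) < thr p x y) →
              (∀ b, Nat.size (v b) < thr p x y) → ρ' i u v = ρ i u v) →
            Tm.eval ρ' t x y = Tm.eval ρ t x y := by
  induction t with
  | zero =>
    refine ⟨1, fun ρ hρ x y => ⟨?_, fun ρ' _ => rfl⟩⟩
    simp [Tm.eval, thr, Nat.size_zero]
  | succ0 j =>
    refine ⟨2, fun ρ hρ x y => ⟨?_, fun ρ' _ => rfl⟩⟩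
    have h1 := size_two_mul (y j)
    have h2 := le_sup_size y j
    simp only [Tm.eval, thr, map_ofNat]
    omega
  | succ1 j =>
    refine ⟨2, fun ρ hρ x y => ⟨?_, fun ρ' _ => rfl⟩⟩
    have h1 := size_two_mul_add_one (y j)
    have h2 := le_sup_size y j
    simp only [Tm.eval, thr, map_ofNat]
    omega
  | projN j =>
    refine ⟨X j + 1, fun ρ hρ x y => ⟨?_, fun ρ' _ => rfl⟩⟩
    simp only [Tm.eval, thr, map_add, eval_X, map_one]
    omega
  | projS j =>
    refine ⟨1, fun ρ hρ x y => ⟨?_, fun ρ' _ => rfl⟩⟩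
    have h2 := le_sup_size y j
    simp only [Tm.eval, thr, map_one]
    omega
  | pred j =>
    refine ⟨1, fun ρ hρ x y => ⟨?_, fun ρ' _ => rfl⟩⟩
    have h1 : Nat.size (y j / 2) ≤ Nat.size (y j) := Nat.size_le_size (Nat.div_le_self _ _)
    have h2 := le_sup_size y j
    simp only [Tm.eval, thr, map_one]
    omega
  | cond w a b c =>
    refine ⟨1, fun ρ hρ x y => ⟨?_, fun ρ' _ => rfl⟩⟩
    have ha := le_sup_size y a
    have hb := le_sup_size y b
    have hc := le_sup_size y c
    simp only [Tm.eval, thr, map_one]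
    split <;> [skip; split] <;> omega
  | oracle i =>
    refine ⟨(∑ a, X a) + 2, fun ρ hρ x y => ⟨?_, fun ρ' hρ' => ?_⟩⟩
    · have h1 : Nat.size (ρ i x y) ≤ 1 := by
        calc Nat.size (ρ i x y) ≤ Nat.size 1 := Nat.size_le_size (hρ i x y)
          _ = 1 := Nat.size_one
      simp only [Tm.eval, thr, map_add, map_ofNat]
      omega
    · show ρ' i x y = ρ i x y
      refine hρ' i x y (fun a => ?_) (fun b => ?_)
      · have : Nat.size (x a) ≤ ∑ a', Nat.size (x a') :=
          Finset.single_le_sum (f := fun a' => Nat.size (x a'))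
            (fun a' _ => Nat.zero_le _) (Finset.mem_univ a)
        simp only [thr, map_add, map_sum, eval_X, map_ofNat]
        omega
      · have := le_sup_size y b
        simp only [thr, map_add, map_sum, eval_X, map_ofNat]
        omega
  | comp h gN gS ihh ihN ihS =>
    rename_i m n m' n'
    obtain ⟨q, hq⟩ := ihh
    choose pN hpN using ihN
    choose pS hpS using ihS
    refine ⟨bind₁ pN q + ∑ i, pN i + ∑ j, pS j, fun ρ hρ x y => ?_⟩
    have sup0 : ∀ z : Fin 0 → ℕ, Finset.univ.sup (fun i => Nat.size (z i)) = 0 := by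
      intro z; simp
    have hXb : ∀ i, Nat.size (Tm.eval ρ (gN i) x Fin.elim0) ≤
        eval (fun a => Nat.size (x a)) (pN i) := by
      intro i
      have := (hpN i ρ hρ x Fin.elim0).1
      rw [thr, sup0] at this
      omega
    have hq1 := (hq ρ hρ (fun i => Tm.eval ρ (gN i) x Fin.elim0)
      (fun j => Tm.eval ρ (gS j) x y)).1
    rw [thr] at hq1
    have A1 : eval (fun i => Nat.size (Tm.eval ρ (gN i) x Fin.elim0)) q ≤
        eval (fun a => Nat.size (x a)) (bind₁ pN q) := by
      rw [eval_bind1]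
      exact mv_eval_mono q hXb
    have A2 : Finset.univ.sup (fun j => Nat.size (Tm.eval ρ (gS j) x y)) ≤
        eval (fun a => Nat.size (x a)) (∑ j, pS j) +
          Finset.univ.sup (fun i => Nat.size (y i)) := by
      refine Finset.sup_le fun j _ => ?_
      have h1 := (hpS j ρ hρ x y).1
      rw [thr] at h1
      have h2 : eval (fun a => Nat.size (x a)) (pS j) ≤
          eval (fun a => Nat.size (x a)) (∑ j', pS j') := by
        rw [map_sum]
        exact Finset.single_le_sum (f := fun j' => eval (fun a => Nat.size (x a)) (pS j'))
          (fun j' _ => Nat.zero_le _) (Finset.mem_univ j)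
      omega
    have hsplit : thr (bind₁ pN q + ∑ i, pN i + ∑ j, pS j) x y =
        eval (fun a => Nat.size (x a)) (bind₁ pN q) +
        eval (fun a => Nat.size (x a)) (∑ i, pN i) +
        eval (fun a => Nat.size (x a)) (∑ j, pS j) +
        Finset.univ.sup (fun i => Nat.size (y i)) := by
      rw [thr, map_add, map_add]
    constructor
    · show Nat.size (Tm.eval ρ h _ _) < _
      rw [hsplit]
      omega
    · intro ρ' hρ'
      rw [hsplit] at hρ'
      have hgN' : ∀ i, Tm.eval ρ' (gN i) x Fin.elim0 = Tm.eval ρ (gN i) x Fin.elim0 := by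
        intro i
        refine (hpN i ρ hρ x Fin.elim0).2 ρ' fun i' u v hu hv => ?_
        have hle : thr (pN i) x Fin.elim0 ≤
            eval (fun a => Nat.size (x a)) (bind₁ pN q) +
            eval (fun a => Nat.size (x a)) (∑ i', pN i') +
            eval (fun a => Nat.size (x a)) (∑ j', pS j') +
            Finset.univ.sup (fun i'' => Nat.size (y i'')) := by
          rw [thr, sup0]
          have h2 : eval (fun a => Nat.size (x a)) (pN i) ≤
              eval (fun a => Nat.size (x a)) (∑ i', pN i') := by
            rw [map_sum]
            exact Finset.single_le_sum (f := fun i' => eval (fun a => Nat.size (x a)) (pN i'))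
              (fun i' _ => Nat.zero_le _) (Finset.mem_univ i)
          omega
        exact hρ' i' u v (fun a => lt_of_lt_of_le (hu a) hle)
          (fun b => lt_of_lt_of_le (hv b) hle)
      have hgS' : ∀ j, Tm.eval ρ' (gS j) x y = Tm.eval ρ (gS j) x y := by
        intro j
        refine (hpS j ρ hρ x y).2 ρ' fun i' u v hu hv => ?_
        have hle : thr (pS j) x y ≤ eval (fun a => Nat.size (x a)) (bind₁ pN q) +
            eval (fun a => Nat.size (x a)) (∑ i, pN i) +
            eval (fun a => Nat.size (x a)) (∑ j, pS j) +
            Finset.univ.sup (fun i => Nat.size (y i)) := by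
          rw [thr]
          have : eval (fun a => Nat.size (x a)) (pS j) ≤
              eval (fun a => Nat.size (x a)) (∑ j', pS j') := by
            rw [map_sum]
            exact Finset.single_le_sum (f := fun j' => eval (fun a => Nat.size (x a)) (pS j'))
              (fun j' _ => Nat.zero_le _) (Finset.mem_univ j)
          omega
        exact hρ' i' u v (fun a => lt_of_lt_of_le (hu a) hle)
          (fun b => lt_of_lt_of_le (hv b) hle)
      show Tm.eval ρ' h _ _ = Tm.eval ρ h _ _
      rw [funext hgN', funext hgS']
      refine (hq ρ hρ _ _).2 ρ' fun i' u v hu hv => ?_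
      have hle : thr q (fun i => Tm.eval ρ (gN i) x Fin.elim0)
          (fun j => Tm.eval ρ (gS j) x y) ≤
            eval (fun a => Nat.size (x a)) (bind₁ pN q) +
            eval (fun a => Nat.size (x a)) (∑ i, pN i) +
            eval (fun a => Nat.size (x a)) (∑ j, pS j) +
            Finset.univ.sup (fun i => Nat.size (y i)) := by
        rw [thr]
        omega
      exact hρ' i' u v (fun a => lt_of_lt_of_le (hu a) hle)
        (fun b => lt_of_lt_of_le (hv b) hle)
  | srec g h0 h1 ihg ih0 ih1 =>
    rename_i m n
    obtain ⟨pg, hpg⟩ := ihg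
    obtain ⟨p0, hp0⟩ := ih0
    obtain ⟨p1, hp1⟩ := ih1
    refine ⟨X 0 * (p0 + p1) + rename Fin.succ pg, fun ρ hρ x y => ?_⟩
    set A := eval (fun i => Nat.size (x i)) (p0 + p1) with hA
    set B := eval (fun i => Nat.size (Fin.tail x i)) pg +
      Finset.univ.sup (fun i => Nat.size (y i)) with hB
    have hcomp : ((fun i => Nat.size (x i)) ∘ Fin.succ) =
        (fun i => Nat.size (Fin.tail x i)) := rfl
    have hT : thr (X 0 * (p0 + p1) + rename Fin.succ pg) x y = Nat.size (x 0) * A + B := by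
      rw [thr, map_add, map_mul, eval_X, eval_rename, hcomp, hB]
      ring
    have main : ∀ ρ' : ∀ i : I, TS (arN i) (arS i),
        (∀ i u v, (∀ a, Nat.size (u a) < Nat.size (x 0) * A + B) →
          (∀ b, Nat.size (v b) < Nat.size (x 0) * A + B) → ρ' i u v = ρ i u v) →
        ∀ v : ℕ, Nat.size v ≤ Nat.size (x 0) →
          Nat.size (srecAux (Tm.eval ρ g) (Tm.eval ρ h0) (Tm.eval ρ h1) v (Fin.tail x) y) <
            Nat.size v * A + B ∧
          srecAux (Tm.eval ρ' g) (Tm.eval ρ' h0) (Tm.eval ρ' h1) v (Fin.tail x) y =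
            srecAux (Tm.eval ρ g) (Tm.eval ρ h0) (Tm.eval ρ h1) v (Fin.tail x) y := by
      intro ρ' hρ' v
      induction v using Nat.strong_induction_on with
      | _ v ih =>
        intro hv
        by_cases hv0 : v = 0
        · subst hv0
          rw [srecAux_zero, srecAux_zero]
          have hgB := hpg ρ hρ (Fin.tail x) y
          rw [thr, ← hB] at hgB
          constructor
          · simpa using hgB.1
          · refine hgB.2 ρ' fun i u v hu hv => ?_
            have hle : B ≤ Nat.size (x 0) * A + B := Nat.le_add_left _ _
            exact hρ' i u v (fun a => lt_of_lt_of_le (hu a) hle)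
              (fun b => lt_of_lt_of_le (hv b) hle)
        · have hv2 : Nat.size (v / 2) ≤ Nat.size (x 0) :=
            le_trans (Nat.size_le_size (Nat.div_le_self v 2)) hv
          obtain ⟨hw, hww⟩ := ih (v / 2)
            (Nat.div_lt_self (Nat.pos_of_ne_zero hv0) one_lt_two) hv2
          set w := srecAux (Tm.eval ρ g) (Tm.eval ρ h0) (Tm.eval ρ h1) (v / 2)
            (Fin.tail x) y with hwdef
          have hx : ∀ i, Nat.size (Fin.cons (v / 2) (Fin.tail x) i) ≤ Nat.size (x i) := by
            intro i
            refine Fin.cases ?_ (fun j => ?_) i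
            · simpa using hv2
            · simp [Fin.tail]
          have hsnoc : Finset.univ.sup (fun b => Nat.size ((Fin.snoc y w : Fin (n+1) → ℕ) b)) ≤
              max (Finset.univ.sup (fun i => Nat.size (y i))) (Nat.size w) := by
            refine Finset.sup_le fun b _ => ?_
            rcases Fin.eq_castSucc_or_eq_last b with ⟨j, rfl⟩ | rfl
            · simp only [Fin.snoc_castSucc]
              exact le_trans (le_sup_size y j) (le_max_left _ _)
            · simp
          have hsyB : Finset.univ.sup (fun i => Nat.size (y i)) ≤ B := Nat.le_add_left _ _
          have hmax : max (Finset.univ.sup (fun i => Nat.size (y i))) (Nat.size w) ≤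
              Nat.size (v / 2) * A + B := by
            refine max_le (le_trans hsyB (Nat.le_add_left _ _)) (le_of_lt hw)
          have hmul : Nat.size v * A = Nat.size (v / 2) * A + A := by
            rw [size_div_two v hv0, Nat.add_mul, one_mul]
          have hp0A : eval (fun i => Nat.size (Fin.cons (v / 2) (Fin.tail x) i)) p0 ≤ A := by
            refine le_trans (mv_eval_mono p0 hx) ?_
            rw [hA, map_add]
            exact Nat.le_add_right _ _
          have hp1A : eval (fun i => Nat.size (Fin.cons (v / 2) (Fin.tail x) i)) p1 ≤ A := by
            refine le_trans (mv_eval_mono p1 hx) ?_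
            rw [hA, map_add]
            exact Nat.le_add_left _ _
          constructor
          · rw [srecAux_ne _ _ _ hv0, ← hwdef]
            by_cases hpar : v % 2 = 0
            · rw [if_pos hpar]
              have hb := (hp0 ρ hρ (Fin.cons (v / 2) (Fin.tail x)) (Fin.snoc y w)).1
              rw [thr] at hb
              omega
            · rw [if_neg hpar]
              have hb := (hp1 ρ hρ (Fin.cons (v / 2) (Fin.tail x)) (Fin.snoc y w)).1
              rw [thr] at hb
              omega
          · rw [srecAux_ne _ _ _ hv0, srecAux_ne _ _ _ hv0, hww, ← hwdef]
            have hagree0 : thr p0 (Fin.cons (v / 2) (Fin.tail x)) (Fin.snoc y w) ≤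
                Nat.size (x 0) * A + B := by
              rw [thr]
              have : Nat.size (v / 2) * A + A ≤ Nat.size (x 0) * A := by
                rw [← hmul]
                exact Nat.mul_le_mul_right A hv
              omega
            have hagree1 : thr p1 (Fin.cons (v / 2) (Fin.tail x)) (Fin.snoc y w) ≤
                Nat.size (x 0) * A + B := by
              rw [thr]
              have : Nat.size (v / 2) * A + A ≤ Nat.size (x 0) * A := by
                rw [← hmul]
                exact Nat.mul_le_mul_right A hv
              omega
            by_cases hpar : v % 2 = 0
            · rw [if_pos hpar, if_pos hpar]
              refine (hp0 ρ hρ (Fin.cons (v / 2) (Fin.tail x)) (Fin.snoc y w)).2 ρ'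
                fun i u vv hu hvv => ?_
              exact hρ' i u vv (fun a => lt_of_lt_of_le (hu a) hagree0)
                (fun b => lt_of_lt_of_le (hvv b) hagree0)
            · rw [if_neg hpar, if_neg hpar]
              refine (hp1 ρ hρ (Fin.cons (v / 2) (Fin.tail x)) (Fin.snoc y w)).2 ρ'
                fun i u vv hu hvv => ?_
              exact hρ' i u vv (fun a => lt_of_lt_of_le (hu a) hagree1)
                (fun b => lt_of_lt_of_le (hvv b) hagree1)
    constructor
    · show Nat.size (srecAux (Tm.eval ρ g) (Tm.eval ρ h0) (Tm.eval ρ h1) (x 0)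
        (Fin.tail x) y) < _
      rw [hT]
      exact (main ρ (fun i u v _ _ => rfl) (x 0) le_rfl).1
    · intro ρ' hρ'
      rw [hT] at hρ'
      show srecAux (Tm.eval ρ' g) (Tm.eval ρ' h0) (Tm.eval ρ' h1) (x 0) (Fin.tail x) y = _
      exact (main ρ' hρ' (x 0) le_rfl).2


/-- Relational bounding for relativised Bellantoni–Cook: every term of `B(R)` over
relation-valued oracles has a polynomial modulus `m_f(|x⃗|,|y⃗|) = p_f(|x⃗|) + max|y⃗|`
of growth and of continuity: the output length is `< m_f`, and the value is unchanged
if every oracle is replaced by its restriction to inputs of length below `m_f`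
(extended by `0` elsewhere). -/
theorem bc_relational_bounding {I : Type} (arN arS : I → ℕ) (m n : ℕ)
    (t : Tm I arN arS m n) :
    ∃ p : MvPolynomial (Fin m) ℕ,
      ∀ ρ : ∀ i : I, TS (arN i) (arS i),
        (∀ i u v, ρ i u v ≤ 1) →
        ∀ (x : Fin m → ℕ) (y : Fin n → ℕ),
          Nat.size (t.eval ρ x y) <
            MvPolynomial.eval (fun i => Nat.size (x i)) p +
              Finset.univ.sup (fun i => Nat.size (y i)) ∧
          Tm.eval (fun i u v =>
              if (∀ a, Nat.size (u a) <
                    MvPolynomial.eval (fun i => Nat.size (x i)) p +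
                      Finset.univ.sup (fun i => Nat.size (y i))) ∧
                 (∀ b, Nat.size (v b) <
                    MvPolynomial.eval (fun i => Nat.size (x i)) p +
                      Finset.univ.sup (fun i => Nat.size (y i)))
              then ρ i u v else 0) t x y
            = t.eval ρ x y := by
  obtain ⟨p, hp⟩ := key t
  refine ⟨p, fun ρ hρ x y => ?_⟩
  obtain ⟨hb, hc⟩ := hp ρ hρ x y
  exact ⟨hb, hc _ fun i u v hu hv => if_pos ⟨hu, hv⟩⟩
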